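/- arXiv:1206.1564 — 4 statements merged into one kernel-verified Lean document; each statement's English description precedes it below -/
import Mathlib

section
/- The universal Novikov ring Λ, consisting of all functions λ : ℝ → ℚ such that for every c ∈ ℝ the set {ε ∈ ℝ | ε ≤ c ∧ λ(ε) ≠ 0} is finite, equipped with pointwise addition and the convolution product (λ·μ)(ε) = Σ_{a+b=ε} λ(a)·μ(b), is a field. -/
/-!
Λ is the subring of the Hahn field `ℚ⟦ℝ⟧` consisting of the series whose support meets every
half-line `(-∞, c]` in a finite set. It is closed under inversion: a nonzero `x` factors as
`r t^a (1 - z)` with `z` of positive order `δ`, and in `x⁻¹ = r⁻¹ t^(-a) ∑ zⁿ` only the finitely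
many powers with `n • δ ≤ c` can contribute below `c`, by the Archimedean property of `ℝ`.
-/

/-- The condition defining the universal Novikov ring: for every `c : ℝ`, only
finitely many exponents `ε ≤ c` carry a nonzero coefficient. -/
def NovikovCond (f : ℝ → ℚ) : Prop :=
  ∀ c : ℝ, {ε : ℝ | ε ≤ c ∧ f ε ≠ 0}.Finite

/-- The universal Novikov ring `Λ`, as the set of coefficient functions `ℝ → ℚ`
satisfying the finiteness condition. -/
def Novikov : Type :=
  {f : ℝ → ℚ // NovikovCond f}

open HahnSeries

def FiniteBelow {Γ R : Type*} [Preorder Γ] [Zero R] (f : Γ → R) : Prop :=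
  ∀ c : Γ, {g : Γ | g ≤ c ∧ f g ≠ 0}.Finite

namespace FiniteBelow

variable {Γ R : Type*}

theorem isPWO_support [LinearOrder Γ] [Zero R] {f : Γ → R} (hf : FiniteBelow f) :
    (Function.support f).IsPWO := by
  refine (Set.isWF_iff_no_descending_seq.mpr fun g hg hmem => ?_).isPWO
  have hsub : Set.range g ⊆ {ε | ε ≤ g 0 ∧ f ε ≠ 0} := by
    rintro _ ⟨n, rfl⟩
    exact ⟨hg.antitone n.zero_le, hmem n⟩
  exact Set.infinite_range_of_injective hg.injective ((hf (g 0)).subset hsub)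

variable [Preorder Γ]

theorem zero [Zero R] : FiniteBelow (0 : Γ → R) := fun _ => by simp

theorem add [AddMonoid R] {f f' : Γ → R} (hf : FiniteBelow f) (hf' : FiniteBelow f') :
    FiniteBelow (f + f') := fun c => by
  refine ((hf c).union (hf' c)).subset fun g ⟨hgc, hg⟩ => ?_
  by_contra! h
  simp_all

theorem neg [SubtractionMonoid R] {f : Γ → R} (hf : FiniteBelow f) :
    FiniteBelow (-f) := fun c => by
  simpa using hf c

end FiniteBelow

theorem finite_setOf_nsmul_le {Γ : Type*} [AddCommGroup Γ] [LinearOrder Γ] [IsOrderedAddMonoid Γ]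
    [Archimedean Γ] {δ : Γ} (hδ : 0 < δ) (c : Γ) : {n : ℕ | n • δ ≤ c}.Finite := by
  obtain ⟨N, hN⟩ := Archimedean.arch c hδ
  exact (Set.finite_Iic N).subset fun n hn => (nsmul_le_nsmul_iff_left hδ).mp (hn.trans hN)

namespace HahnSeries

variable {Γ R : Type*}

theorem finiteBelow_single [PartialOrder Γ] [Zero R] (a : Γ) (r : R) :
    FiniteBelow (single a r).coeff := fun _ =>
  (Set.finite_singleton a).subset fun g ⟨_, hg⟩ => by
    by_contra hga
    exact hg (coeff_single_of_ne hga)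

theorem coeff_mul_eq_finsum [AddCommGroup Γ] [PartialOrder Γ] [IsOrderedAddMonoid Γ] [Semiring R]
    (x y : HahnSeries Γ R) (g : Γ) :
    (x * y).coeff g = ∑ᶠ a, x.coeff a * y.coeff (g - a) := by
  classical
  set s := Finset.antidiagonal x.isPWO_support y.isPWO_support g
  have hsupp : (Function.support fun a => x.coeff a * y.coeff (g - a)) ⊆ s.image Prod.fst := by
    intro a ha
    refine Finset.mem_image.mpr ⟨(a, g - a), ?_, rfl⟩
    exact Finset.mem_antidiagonal.mpr
      ⟨left_ne_zero_of_mul ha, right_ne_zero_of_mul ha, add_sub_cancel a g⟩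
  rw [coeff_mul, finsum_eq_finsetSum_of_support_subset _ hsupp, Finset.sum_image]
  · refine Finset.sum_congr rfl fun p hp => ?_
    rw [← (Finset.mem_antidiagonal.mp hp).2.2, add_sub_cancel_left]
  · intro p hp q hq hpq
    have hp' := (Finset.mem_antidiagonal.mp hp).2.2
    have hq' := (Finset.mem_antidiagonal.mp hq).2.2
    exact Prod.ext hpq (by rw [hpq] at hp'; exact add_left_cancel (hp'.trans hq'.symm))

variable [AddCommGroup Γ] [LinearOrder Γ] [IsOrderedAddMonoid Γ]

section Ring

variable [Ring R]

theorem finiteBelow_mul {x y : HahnSeries Γ R} (hx : FiniteBelow x.coeff)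
    (hy : FiniteBelow y.coeff) : FiniteBelow (x * y).coeff := fun c => by
  refine ((hx (c - y.order)).add (hy (c - x.order))).subset fun g ⟨hgc, hg⟩ => ?_
  obtain ⟨a, ha, b, hb, rfl⟩ := support_mul_subset hg
  have hxa : x.order ≤ a := order_le_of_coeff_ne_zero ha
  have hyb : y.order ≤ b := order_le_of_coeff_ne_zero hb
  exact Set.add_mem_add ⟨le_sub_iff_add_le.mpr ((add_le_add le_rfl hyb).trans hgc), ha⟩
    ⟨le_sub_iff_add_le'.mpr ((add_le_add hxa le_rfl).trans hgc), hb⟩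

variable (Γ R) in
def novikovSubring : Subring (HahnSeries Γ R) where
  carrier := {x | FiniteBelow x.coeff}
  zero_mem' := FiniteBelow.zero
  one_mem' := finiteBelow_single 0 1
  add_mem' hx hy := hx.add hy
  neg_mem' hx := hx.neg
  mul_mem' := finiteBelow_mul

end Ring

theorem hsum_powers_mem_novikovSubring [Archimedean Γ] [CommRing R] {z : HahnSeries Γ R}
    (hz : z ∈ novikovSubring Γ R) : (SummableFamily.powers z).hsum ∈ novikovSubring Γ R := by
  rcases eq_or_ne z 0 with rfl | hz0
  · simp
  by_cases hpos : 0 < z.orderTop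
  swap
  · rw [SummableFamily.powers_of_not_orderTop_pos hpos]
    simp
  have hδ : 0 < z.order := (zero_lt_orderTop_iff hz0).mp hpos
  intro c
  refine ((finite_setOf_nsmul_le hδ c).biUnion fun n _ => pow_mem hz n c).subset
    fun g ⟨hgc, hg⟩ => ?_
  obtain ⟨n, hn⟩ := Set.mem_iUnion.mp (SummableFamily.support_hsum_subset hg)
  rw [SummableFamily.powers_of_orderTop_pos hpos, mem_support] at hn
  have hng : n • z.order ≤ g := by
    have := orderTop_nsmul_le_orderTop_pow.trans (orderTop_le_of_coeff_ne_zero hn)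
    rwa [← order_eq_orderTop_of_ne_zero hz0, ← WithTop.coe_nsmul, WithTop.coe_le_coe] at this
  exact Set.mem_biUnion (hng.trans hgc) ⟨hgc, hn⟩

variable (Γ R) in
def novikovSubfield [Field R] [Archimedean Γ] : Subfield (HahnSeries Γ R) where
  __ := novikovSubring Γ R
  inv_mem' x hx := by
    have hsingle : single (-x.order) x.leadingCoeff⁻¹ ∈ novikovSubring Γ R :=
      finiteBelow_single _ _
    rw [inv_def]
    exact mul_mem hsingle (hsum_powers_mem_novikovSubring (sub_mem (one_mem _) (mul_mem hsingle hx)))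

end HahnSeries

def Novikov.equivNovikovSubfield : Novikov ≃ novikovSubfield ℝ ℚ where
  toFun f := ⟨⟨f.1, FiniteBelow.isPWO_support f.2⟩, f.2⟩
  invFun x := ⟨x.1.coeff, x.2⟩

/-- The universal Novikov ring `Λ`, equipped with pointwise addition and the
convolution product `(λ·μ)(ε) = Σ_{a+b=ε} λ(a)·μ(b)`, is a field. -/
theorem novikov_is_field :
    ∃ F : Field Novikov,
      (∀ f g : Novikov, ∀ ε : ℝ, (F.add f g).val ε = f.val ε + g.val ε) ∧
      (∀ f g : Novikov, ∀ ε : ℝ,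
        (F.mul f g).val ε = ∑ᶠ a : ℝ, f.val a * g.val (ε - a)) :=
  ⟨Novikov.equivNovikovSubfield.field, fun _ _ _ => rfl, fun f g =>
    coeff_mul_eq_finsum (Novikov.equivNovikovSubfield f).1 (Novikov.equivNovikovSubfield g).1⟩
end

section
/- There is no entire function f : ℂ → ℂ such that f(z) ≠ 0 for all z ∈ ℂ and the induced map from ℂ to the punctured plane {z : ℂ | z ≠ 0} (with its subspace topology) is proper, i.e. such that preimages of compact subsets of the punctured plane are compact. -/
/-!
Properness into `ℂ ∖ {0}` says that `f z` leaves every annulus `ε ≤ ‖w‖ ≤ R` as `z → ∞`, i.e.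
`f` tends to `{0, ∞}`. Since the exterior of a disc is connected, `f` tends to one of the two ends:
either `f → 0`, or `f → ∞` and then `1 / f → 0`. Liouville's theorem then makes the nowhere
vanishing entire function `f` or `1 / f` identically zero, which is absurd.
-/

open Set Metric Filter Bornology Topology

theorem Filter.Tendsto.of_sup_of_disjoint {α β : Type*} {f : α → β} {l : Filter α}
    {a b : Filter β} {s : Set β} (h : Tendsto f l (a ⊔ b)) (hs : ∀ᶠ x in l, f x ∈ s)
    (hbs : Disjoint b (𝓟 s)) : Tendsto f l a := by
  have := tendsto_inf.2 ⟨h, tendsto_principal.2 hs⟩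
  rw [inf_sup_right, hbs.eq_bot, sup_bot_eq] at this
  exact this.mono_right inf_le_left

theorem isPreconnected_compl_closedBall {E : Type*} [NormedAddCommGroup E] [NormedSpace ℝ E]
    (h : 1 < Module.rank ℝ E) (x : E) {R : ℝ} (hR : 0 ≤ R) :
    IsPreconnected (closedBall x R)ᶜ := by
  have polar : (closedBall x R)ᶜ = (fun p : E × ℝ => x + p.2 • p.1) '' (sphere 0 1 ×ˢ Ioi R) := by
    ext z
    simp only [mem_compl_iff, mem_closedBall, dist_eq_norm, not_le, mem_image, mem_prod,
      mem_sphere_zero_iff_norm, mem_Ioi, Prod.exists]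
    constructor
    · intro hz
      have hne : ‖z - x‖ ≠ 0 := (hR.trans_lt hz).ne'
      refine ⟨‖z - x‖⁻¹ • (z - x), ‖z - x‖, ⟨?_, hz⟩, ?_⟩
      · rw [norm_smul, norm_inv, norm_norm, inv_mul_cancel₀ hne]
      · rw [smul_smul, mul_inv_cancel₀ hne, one_smul, add_sub_cancel]
    · rintro ⟨u, t, ⟨hu, ht⟩, rfl⟩
      rwa [add_sub_cancel_left, norm_smul, hu, mul_one, Real.norm_of_nonneg (hR.trans ht.le)]
  rw [polar]
  exact ((isPreconnected_sphere h 0 1).prod isPreconnected_Ioi).image _ (by fun_prop)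

theorem mem_cobounded_or_mem_cobounded_of_union {E : Type*} [NormedAddCommGroup E]
    [NormedSpace ℝ E] (h : 1 < Module.rank ℝ E) {U V : Set E} (hU : IsOpen U) (hV : IsOpen V)
    (hUV : Disjoint U V) (hmem : U ∪ V ∈ cobounded E) :
    U ∈ cobounded E ∨ V ∈ cobounded E := by
  obtain ⟨R, -, hR⟩ := (hasBasis_cobounded_compl_closedBall (0 : E)).mem_iff.1 hmem
  have hext : (closedBall (0 : E) (max R 0))ᶜ ⊆ U ∪ V :=
    (compl_subset_compl.2 (closedBall_subset_closedBall (le_max_left R 0))).trans hR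
  have hcob : (closedBall (0 : E) (max R 0))ᶜ ∈ cobounded E :=
    isBounded_def.1 isBounded_closedBall
  exact ((isPreconnected_compl_closedBall h 0 (le_max_right R 0)).subset_or_subset
    hU hV hUV hext).imp (mem_of_superset hcob) (mem_of_superset hcob)

theorem tendsto_zero_or_cobounded_of_tendsto_sup {E F : Type*} [NormedAddCommGroup E]
    [NormedSpace ℝ E] [NormedAddCommGroup F] (h : 1 < Module.rank ℝ E) {f : E → F}
    (hf : Continuous f) (hlim : Tendsto f (cobounded E) (𝓝 0 ⊔ cobounded F)) :
    Tendsto f (cobounded E) (𝓝 0) ∨ Tendsto f (cobounded E) (cobounded F) := by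
  have hsplit : ball (0 : F) 1 ∪ (closedBall 0 1)ᶜ ∈ 𝓝 0 ⊔ cobounded F :=
    mem_sup.2 ⟨mem_of_superset (ball_mem_nhds 0 one_pos) subset_union_left,
      mem_of_superset (isBounded_def.1 isBounded_closedBall) subset_union_right⟩
  have hdisj : Disjoint (ball (0 : F) 1) (closedBall 0 1)ᶜ :=
    disjoint_compl_right_iff_subset.2 ball_subset_closedBall
  rcases mem_cobounded_or_mem_cobounded_of_union h (isOpen_ball.preimage hf)
    (isClosed_closedBall.isOpen_compl.preimage hf) (hdisj.preimage f) (hlim hsplit)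
    with hsmall | hlarge
  · exact .inl (hlim.of_sup_of_disjoint hsmall
      (disjoint_principal_right.2 (isBounded_def.1 isBounded_ball)))
  · exact .inr ((hlim.mono_right (sup_comm _ _).le).of_sup_of_disjoint hlarge
      (disjoint_principal_right.2 (by simpa using closedBall_mem_nhds (0 : F) one_pos)))

theorem tendsto_zero_sup_cobounded_of_isCompact_preimage {X F : Type*} [TopologicalSpace X]
    [NormedAddCommGroup F] [ProperSpace F] {f : X → F}
    (hprop : ∀ K : Set {w : F // w ≠ 0}, IsCompact K → IsCompact (f ⁻¹' (Subtype.val '' K))) :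
    Tendsto f (cocompact X) (𝓝 0 ⊔ cobounded F) := by
  intro s hs
  obtain ⟨hs0, hsinf⟩ := mem_sup.1 hs
  obtain ⟨ε, hε, hball⟩ := Metric.mem_nhds_iff.1 hs0
  obtain ⟨R, -, hR⟩ := (hasBasis_cobounded_compl_closedBall (0 : F)).mem_iff.1 hsinf
  set A := closedBall (0 : F) R \ ball 0 ε
  have hA0 : A ⊆ {w | w ≠ 0} := fun w hw h0 => hw.2 (h0 ▸ mem_ball_self hε)
  have hAK : Subtype.val '' (Subtype.val ⁻¹' A : Set {w : F // w ≠ 0}) = A :=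
    image_preimage_eq_of_subset (by rwa [Subtype.range_coe_subtype])
  have hAcpt : IsCompact (f ⁻¹' A) := by
    have hK : IsCompact (Subtype.val ⁻¹' A : Set {w : F // w ≠ 0}) := by
      rw [Subtype.isCompact_iff, hAK]
      exact (isCompact_closedBall 0 R).diff isOpen_ball
    rw [← hAK]
    exact hprop _ hK
  refine mem_cocompact.2 ⟨_, hAcpt, fun z hz => ?_⟩
  by_contra hzs
  exact hz ⟨not_not.1 fun hR' => hzs (hR hR'), fun hε' => hzs (hball hε')⟩

/-- There is no entire function `f : ℂ → ℂ` which is nowhere zero and such that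
the induced map from `ℂ` to the punctured plane `{z : ℂ | z ≠ 0}` (with its
subspace topology) is proper, i.e. preimages of compact subsets of the punctured
plane are compact.  (Geometrically: there is no proper holomorphic map — in
particular no branched covering — from the plane to the cylinder `ℝ × S¹ ≅ ℂ∖{0}`.) -/
theorem no_proper_holomorphic_plane_to_cylinder :
    ¬ ∃ f : ℂ → ℂ, Differentiable ℂ f ∧ (∀ z : ℂ, f z ≠ 0) ∧
      (∀ K : Set {w : ℂ // w ≠ 0}, IsCompact K →
        IsCompact (f ⁻¹' (Subtype.val '' K))) := by
  rintro ⟨f, hf, hne, hprop⟩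
  have hlim := tendsto_zero_sup_cobounded_of_isCompact_preimage hprop
  rw [← cobounded_eq_cocompact] at hlim
  have hrank : 1 < Module.rank ℝ ℂ := by simp
  rcases tendsto_zero_or_cobounded_of_tendsto_sup hrank hf.continuous hlim with h0 | hinf
  · exact hne 0 (hf.apply_eq_of_tendsto_cocompact 0 (cobounded_eq_cocompact (α := ℂ) ▸ h0))
  · exact inv_ne_zero (hne 0) ((hf.inv hne).apply_eq_of_tendsto_cocompact 0
      (cobounded_eq_cocompact (α := ℂ) ▸ tendsto_inv₀_cobounded.comp hinf))
end

section
/- Let f : ℂ → ℂ be a function that is complex differentiable at every point z ≠ 0, satisfies f(z) ≠ 0 for every z ≠ 0, and is such that the induced self-map of the punctured plane {z : ℂ | z ≠ 0} (with its subspace topology) is proper (preimages of compact sets are compact). Then there exist c ∈ ℂ with c ≠ 0 and a nonzero integer n ∈ ℤ such that f(z) = c · zⁿ for every z ≠ 0 (zⁿ denoting the integer power). In particular, a degree-k unbranched holomorphic covering of the cylinder by itself is, up to automorphisms of the domain, of the form z ↦ c·z^k. -/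
/-!
Properness makes `f` leave every compact annulus `{a ≤ ‖w‖ ≤ b}` near `0` and near `∞`. As punctured
discs are connected, `f` therefore tends to `0` or to `∞` at each end of `ℂ ∖ {0}`, so by the
removable singularity theorem `f` is meromorphic at `0` and at `∞`, with nonzero order `n` at `0`.
Then `f z / z ^ n` extends to an entire function without zeros that is meromorphic at `∞`; it cannot
have a pole there (its inverse would be an entire function tending to `0`), so it is bounded and
Liouville's theorem makes it constant.
-/

open Filter Metric Set Function Bornology Topology

theorem eventually_notMem_of_isCompact_preimage {f : ℂ → ℂ} {K : Set ℂ}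
    (hK : IsCompact {z : ℂ | z ≠ 0 ∧ f z ∈ K}) :
    (∀ᶠ z in 𝓝[≠] 0, f z ∉ K) ∧ ∀ᶠ z in cobounded ℂ, f z ∉ K := by
  have hnhds : {z : ℂ | z ≠ 0 ∧ f z ∈ K}ᶜ ∈ 𝓝 0 :=
    hK.isClosed.isOpen_compl.mem_nhds fun h => h.1 rfl
  constructor
  · filter_upwards [nhdsWithin_le_nhds hnhds, self_mem_nhdsWithin] with z hz hz0 hfz
    exact hz ⟨hz0, hfz⟩
  · filter_upwards [isBounded_def.1 hK.isBounded, eventually_ne_cobounded 0] with z hz hz0 hfz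
    exact hz ⟨hz0, hfz⟩

theorem Complex.isPreconnected_ball_zero_diff_singleton (r : ℝ) :
    IsPreconnected (ball (0 : ℂ) r \ {0}) := by
  rcases le_or_gt r 0 with hr | hr
  · simp [ball_eq_empty.2 hr, isPreconnected_empty]
  have hexp : ball (0 : ℂ) r \ {0} = exp '' {w : ℂ | w.re < Real.log r} := by
    ext z
    constructor
    · rintro ⟨hz, hz0 : z ≠ 0⟩
      refine ⟨log z, ?_, exp_log hz0⟩
      rw [mem_ofPred_eq, log_re, Real.log_lt_log_iff (norm_pos_iff.2 hz0) hr]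
      simpa using hz
    · rintro ⟨w, hw : w.re < _, rfl⟩
      refine ⟨?_, exp_ne_zero w⟩
      rwa [mem_ball_zero_iff, norm_exp, ← Real.lt_log_iff_exp_lt hr]
  rw [hexp]
  exact (convex_halfSpace_re_lt _).isPreconnected.image _ continuous_exp.continuousOn

theorem eventually_lt_or_eventually_gt_nhdsNE_zero {g : ℂ → ℝ} {c : ℝ}
    (hg : ∀ᶠ z in 𝓝[≠] 0, ContinuousAt g z) (hne : ∀ᶠ z in 𝓝[≠] 0, g z ≠ c) :
    (∀ᶠ z in 𝓝[≠] 0, g z < c) ∨ ∀ᶠ z in 𝓝[≠] 0, c < g z := by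
  obtain ⟨r, hr, hs⟩ := mem_nhdsWithin_iff.1 (hg.and hne)
  have hball : ∀ᶠ z in 𝓝[≠] 0, z ∈ ball (0 : ℂ) r \ {0} :=
    sdiff_mem_nhdsWithin_compl (ball_mem_nhds _ hr) _
  by_cases hlt : ∀ z ∈ ball (0 : ℂ) r \ {0}, g z < c
  · exact Or.inl (hball.mono hlt)
  push Not at hlt
  obtain ⟨z₁, hz₁, hcz₁⟩ := hlt
  refine Or.inr (hball.mono fun z hz => (lt_or_gt_of_ne (hs hz).2).resolve_left fun hzc => ?_)
  have hcont : ContinuousOn g (ball (0 : ℂ) r \ {0}) := fun w hw => (hs hw).1.continuousWithinAt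
  obtain ⟨w, hw, hgw⟩ := (Complex.isPreconnected_ball_zero_diff_singleton r).intermediate_value
    hz hz₁ hcont ⟨hzc.le, hcz₁⟩
  exact (hs hw).2 hgw

theorem tendsto_zero_or_cobounded_of_eventually_notMem {f : ℂ → ℂ}
    (hf : ∀ᶠ z in 𝓝[≠] 0, ContinuousAt f z)
    (hesc : ∀ K : Set ℂ, IsCompact K → K ⊆ {z : ℂ | z ≠ 0} → ∀ᶠ z in 𝓝[≠] 0, f z ∉ K) :
    Tendsto f (𝓝[≠] 0) (𝓝 0) ∨ Tendsto f (𝓝[≠] 0) (cobounded ℂ) := by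
  have hannulus : ∀ a b : ℝ, 0 < a → ∀ᶠ z in 𝓝[≠] 0, ‖f z‖ < a ∨ b < ‖f z‖ := by
    intro a b ha
    have hK : closedBall (0 : ℂ) b \ ball 0 a ⊆ {z : ℂ | z ≠ 0} := by
      rintro w ⟨-, hw⟩ rfl
      exact hw (mem_ball_self ha)
    filter_upwards [hesc _ ((isCompact_closedBall 0 b).diff isOpen_ball) hK] with z hz
    simp only [Set.mem_sdiff, mem_closedBall_zero_iff, mem_ball_zero_iff, not_and, not_not] at hz
    exact (le_or_gt _ b).imp hz id
  have hne : ∀ᶠ z in 𝓝[≠] 0, ‖f z‖ ≠ 1 :=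
    (hannulus 1 1 one_pos).mono fun z hz => hz.elim ne_of_lt fun h => h.ne'
  rcases eventually_lt_or_eventually_gt_nhdsNE_zero (hf.mono fun z hz => hz.norm) hne with h | h
  · refine Or.inl (NormedAddGroup.tendsto_nhds_zero.2 fun ε hε => ?_)
    filter_upwards [hannulus ε 1 hε, h] with z hz h1
    exact hz.resolve_right h1.not_gt
  · refine Or.inr (tendsto_norm_atTop_iff_cobounded.1 (tendsto_atTop.2 fun b => ?_))
    filter_upwards [hannulus 1 b one_pos, h] with z hz h1
    exact (hz.resolve_left h1.not_gt).le

theorem meromorphicAt_of_tendsto_nhds {E : Type*} [NormedAddCommGroup E] [NormedSpace ℂ E]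
    [CompleteSpace E] {f : ℂ → E} {x : ℂ} {c : E}
    (hd : ∀ᶠ z in 𝓝[≠] x, DifferentiableAt ℂ f z) (hc : Tendsto f (𝓝[≠] x) (𝓝 c)) :
    MeromorphicAt f x := by
  have hupd : ∀ᶠ z in 𝓝[≠] x, DifferentiableAt ℂ (update f x c) z := by
    filter_upwards [hd, self_mem_nhdsWithin] with z hz hzx
    exact hz.congr_of_eventuallyEq ((eventually_ne_nhds hzx).mono fun w hw => update_of_ne hw _ _)
  exact (Complex.analyticAt_of_differentiable_on_punctured_nhds_of_continuousAt hupd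
    (continuousAt_update_same.2 hc)).meromorphicAt.congr (update_eventuallyEq_nhdsNE f x x c)

theorem meromorphicAt_of_tendsto_cobounded {f : ℂ → ℂ} {x : ℂ}
    (hd : ∀ᶠ z in 𝓝[≠] x, DifferentiableAt ℂ f z) (hf : Tendsto f (𝓝[≠] x) (cobounded ℂ)) :
    MeromorphicAt f x := by
  have hinv : ∀ᶠ z in 𝓝[≠] x, DifferentiableAt ℂ f⁻¹ z := by
    filter_upwards [hd, hf.eventually (eventually_ne_cobounded 0)] with z hz hz0
    exact hz.inv hz0
  simpa using (meromorphicAt_of_tendsto_nhds hinv (tendsto_inv₀_cobounded.comp hf)).inv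

theorem meromorphicAt_of_tendsto_zero_or_cobounded {f : ℂ → ℂ} {x : ℂ}
    (hd : ∀ᶠ z in 𝓝[≠] x, DifferentiableAt ℂ f z)
    (h : Tendsto f (𝓝[≠] x) (𝓝 0) ∨ Tendsto f (𝓝[≠] x) (cobounded ℂ)) :
    MeromorphicAt f x :=
  h.elim (meromorphicAt_of_tendsto_nhds hd) (meromorphicAt_of_tendsto_cobounded hd)

theorem meromorphicOrderAt_ne_zero_of_tendsto_zero_or_cobounded {𝕜 E : Type*}
    [NontriviallyNormedField 𝕜] [NormedAddCommGroup E] [NormedSpace 𝕜 E] {f : 𝕜 → E} {x : 𝕜}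
    (hf : MeromorphicAt f x)
    (h : Tendsto f (𝓝[≠] x) (𝓝 0) ∨ Tendsto f (𝓝[≠] x) (cobounded E)) :
    meromorphicOrderAt f x ≠ 0 :=
  h.elim (fun h => ((tendsto_zero_iff_meromorphicOrderAt_pos hf).1 h).ne')
    fun h => ((tendsto_cobounded_iff_meromorphicOrderAt_neg hf).1 h).ne

theorem Differentiable.exists_forall_eq_const_of_meromorphicAt_inv {G : ℂ → ℂ}
    (hG : Differentiable ℂ G) (hne : ∀ z, G z ≠ 0) (hinf : MeromorphicAt (fun z => G z⁻¹) 0) :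
    ∃ c, ∀ z, G z = c := by
  have hinv : Tendsto (fun z : ℂ => z⁻¹) (cocompact ℂ) (𝓝[≠] 0) :=
    cobounded_eq_cocompact (α := ℂ) ▸ tendsto_inv₀_cobounded'
  rcases le_or_gt 0 (meromorphicOrderAt (fun z => G z⁻¹) 0) with h | h
  · obtain ⟨c, hc⟩ := tendsto_nhds_of_meromorphicOrderAt_nonneg hinf h
    exact ⟨c, fun z => hG.apply_eq_of_tendsto_cocompact z (by simpa [comp_def] using hc.comp hinv)⟩
  · have hlim : Tendsto G⁻¹ (cocompact ℂ) (𝓝 0) := tendsto_inv₀_cobounded.comp <| by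
      simpa [comp_def] using (tendsto_cobounded_of_meromorphicOrderAt_neg h).comp hinv
    exact absurd ((hG.inv hne).apply_eq_of_tendsto_cocompact 0 hlim) (inv_ne_zero (hne 0))

theorem exists_eq_const_mul_zpow_of_meromorphicAt {f : ℂ → ℂ} {n : ℤ}
    (hd : ∀ z : ℂ, z ≠ 0 → DifferentiableAt ℂ f z) (hne : ∀ z : ℂ, z ≠ 0 → f z ≠ 0)
    (h0 : MeromorphicAt f 0) (hn : meromorphicOrderAt f 0 = n)
    (hinf : MeromorphicAt (fun z => f z⁻¹) 0) :
    ∃ c : ℂ, c ≠ 0 ∧ ∀ z : ℂ, z ≠ 0 → f z = c * z ^ n := by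
  obtain ⟨h, han, hh0, hfh⟩ := (meromorphicOrderAt_eq_int_iff h0).1 hn
  set G := update (fun z => f z / z ^ n) 0 (h 0)
  have hG : ∀ z, z ≠ 0 → G z = f z / z ^ n := fun z hz => update_of_ne hz _ _
  have hGh : G =ᶠ[𝓝 0] h := by
    refine eventuallyEq_nhds_of_eventuallyEq_nhdsNE ?_ (update_self ..)
    filter_upwards [hfh, self_mem_nhdsWithin] with z hz hz0
    rw [hG z hz0, hz, sub_zero, smul_eq_mul, mul_div_cancel_left₀ _ (zpow_ne_zero n hz0)]
  have hGd : Differentiable ℂ G := by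
    intro z
    rcases eq_or_ne z 0 with rfl | hz
    · exact han.differentiableAt.congr_of_eventuallyEq hGh
    · exact ((hd z hz).div (differentiableAt_zpow.2 (Or.inl hz)) (zpow_ne_zero n hz))
        |>.congr_of_eventuallyEq ((eventually_ne_nhds hz).mono hG)
  have hGne : ∀ z, G z ≠ 0 := by
    intro z
    rcases eq_or_ne z 0 with rfl | hz
    · simpa [G] using hh0
    · rw [hG z hz]
      exact div_ne_zero (hne z hz) (zpow_ne_zero n hz)
  have hGinf : MeromorphicAt (fun z => G z⁻¹) 0 := by
    refine (hinf.div ((MeromorphicAt.id 0).inv.zpow n)).congr ?_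
    filter_upwards [self_mem_nhdsWithin] with z hz
    simp [hG _ (inv_ne_zero hz)]
  obtain ⟨c, hc⟩ := hGd.exists_forall_eq_const_of_meromorphicAt_inv hGne hGinf
  refine ⟨c, hc 1 ▸ hGne 1, fun z hz => ?_⟩
  rw [← div_eq_iff (zpow_ne_zero n hz), ← hG z hz, hc z]

/-- Classification of proper holomorphic self-maps of the punctured plane
(equivalently, of the cylinder `ℝ × S¹`): if `f : ℂ → ℂ` is complex differentiable
and nonvanishing at every `z ≠ 0`, and the induced self-map of the punctured plane
`{z : ℂ | z ≠ 0}` (with its subspace topology) is proper — preimages of compact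
subsets are compact — then `f(z) = c · zⁿ` on `ℂ ∖ {0}` for some `c ≠ 0` and some
nonzero integer `n`. -/
theorem proper_holomorphic_self_map_of_punctured_plane (f : ℂ → ℂ)
    (hdiff : ∀ z : ℂ, z ≠ 0 → DifferentiableAt ℂ f z)
    (hne : ∀ z : ℂ, z ≠ 0 → f z ≠ 0)
    (hproper : ∀ K : Set ℂ, IsCompact K → K ⊆ {z : ℂ | z ≠ 0} →
      IsCompact {z : ℂ | z ≠ 0 ∧ f z ∈ K}) :
    ∃ c : ℂ, c ≠ 0 ∧ ∃ n : ℤ, n ≠ 0 ∧ ∀ z : ℂ, z ≠ 0 → f z = c * z ^ n := by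
  have hesc K hK hK0 := eventually_notMem_of_isCompact_preimage (hproper K hK hK0)
  have hd0 : ∀ᶠ z in 𝓝[≠] 0, DifferentiableAt ℂ f z := eventually_nhdsWithin_of_forall hdiff
  have hdinf : ∀ᶠ z in 𝓝[≠] 0, DifferentiableAt ℂ (fun z => f z⁻¹) z :=
    eventually_nhdsWithin_of_forall fun z hz =>
      (hdiff _ (inv_ne_zero hz)).comp z (differentiableAt_inv hz)
  have hlim0 := tendsto_zero_or_cobounded_of_eventually_notMem
    (hd0.mono fun _ h => h.continuousAt) fun K hK hK0 => (hesc K hK hK0).1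
  have hliminf := tendsto_zero_or_cobounded_of_eventually_notMem
    (hdinf.mono fun _ h => h.continuousAt) fun K hK hK0 =>
      tendsto_inv₀_nhdsNE_zero.eventually (hesc K hK hK0).2
  have hmero0 := meromorphicAt_of_tendsto_zero_or_cobounded hd0 hlim0
  obtain ⟨n, hn⟩ := WithTop.ne_top_iff_exists.1
    ((meromorphicOrderAt_ne_top_iff_eventually_ne_zero hmero0).2
      (eventually_nhdsWithin_of_forall hne))
  obtain ⟨c, hc, hfc⟩ := exists_eq_const_mul_zpow_of_meromorphicAt hdiff hne hmero0 hn.symm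
    (meromorphicAt_of_tendsto_zero_or_cobounded hdinf hliminf)
  refine ⟨c, hc, n, ?_, hfc⟩
  rintro rfl
  exact meromorphicOrderAt_ne_zero_of_tendsto_zero_or_cobounded hmero0 hlim0 hn.symm
end

section
/- Let R be a commutative ring, K ∈ ℕ, F a polynomial in K variables over R (an element of MvPolynomial (Fin K) R), and g : Fin K → Fin K → R a symmetric matrix (g γ δ = g δ γ for all γ, δ). For indices α, β, γ set c(α, β, γ) := ∂_α ∂_β ∂_γ F, the iterated formal partial derivative of F. Assume F satisfies the WDVV equations: for all α₀, α₁, β₁, β_∞, Σ_{γ, δ} c(α₀, α₁, γ) · g γ δ · c(δ, β₁, β_∞) = Σ_{γ, δ} c(α₀, β₁, γ) · g γ δ · c(δ, α₁, β_∞). Define a product ⋆ on the free module over MvPolynomial (Fin K) R with basis (e_α)_{α : Fin K} by e_α ⋆ e_β := Σ_{γ, δ} c(α, β, γ) · g γ δ · e_δ, extended bilinearly over MvPolynomial (Fin K) R. Then ⋆ is commutative and associative: e_α ⋆ e_β = e_β ⋆ e_α and (e_α ⋆ e_β) ⋆ e_μ = e_α ⋆ (e_β ⋆ e_μ) for all α,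 β, μ. -/
/-!
Partial derivatives commute, since their commutator is a derivation vanishing on the
variables. Hence `∂_α ∂_β ∂_γ F` is symmetric in `α, β`, which makes `⋆` commutative. By
commutativity `e_α ⋆ (e_β ⋆ e_μ) = (e_β ⋆ e_μ) ⋆ e_α`, and the coefficients of
`(e_α ⋆ e_β) ⋆ e_μ` and `(e_β ⋆ e_μ) ⋆ e_α` are the two sides of a WDVV equation.
-/

open MvPolynomial

/-- The triple formal partial derivative `∂_α ∂_β ∂_γ F` of a polynomial `F`. -/
noncomputable def tripleDeriv {R : Type*} [CommRing R] {K : ℕ} (F : MvPolynomial (Fin K) R)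
    (α β γ : Fin K) : MvPolynomial (Fin K) R :=
  pderiv α (pderiv β (pderiv γ F))

/-- The big quantum product on the free module over `MvPolynomial (Fin K) R` with
basis `(e_α)`, defined by `e_α ⋆ e_β = Σ_{γ,δ} (∂_α ∂_β ∂_γ F) · g γ δ · e_δ` and
extended bilinearly: `(v ⋆ w) δ = Σ_{α,β,γ} v_α · w_β · (∂_α ∂_β ∂_γ F) · g γ δ`. -/
noncomputable def wdvvProd {R : Type*} [CommRing R] {K : ℕ} (F : MvPolynomial (Fin K) R)
    (g : Fin K → Fin K → R) (v w : Fin K → MvPolynomial (Fin K) R) :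
    Fin K → MvPolynomial (Fin K) R :=
  fun δ => ∑ α : Fin K, ∑ β : Fin K, ∑ γ : Fin K,
    v α * w β * tripleDeriv F α β γ * C (g γ δ)

namespace MvPolynomial

variable {R σ : Type*} [CommRing R]

theorem lie_pderiv_pderiv (i j : σ) :
    ⁅pderiv (R := R) (σ := σ) i, pderiv (R := R) j⁆ = 0 := by
  classical
  refine derivation_ext fun k => ?_
  simp [Derivation.commutator_apply, pderiv_X, Pi.single_apply, apply_ite]

theorem pderiv_comm (i j : σ) (f : MvPolynomial σ R) :
    pderiv i (pderiv j f) = pderiv j (pderiv i f) := by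
  rw [← sub_eq_zero, ← Derivation.commutator_apply, lie_pderiv_pderiv, Derivation.zero_apply]

end MvPolynomial

section

variable {R : Type*} [CommRing R] {K : ℕ} (F : MvPolynomial (Fin K) R) (g : Fin K → Fin K → R)

theorem tripleDeriv_comm (α β γ : Fin K) : tripleDeriv F α β γ = tripleDeriv F β α γ :=
  pderiv_comm α β _

theorem wdvvProd_comm (v w : Fin K → MvPolynomial (Fin K) R) :
    wdvvProd F g v w = wdvvProd F g w v := by
  funext δ
  rw [wdvvProd, wdvvProd, Finset.sum_comm]
  simp only [mul_comm (v _), tripleDeriv_comm F _ _]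

theorem wdvvProd_single_right (v : Fin K → MvPolynomial (Fin K) R) (μ ε : Fin K) :
    wdvvProd F g v (Pi.single μ 1) ε = ∑ γ, (∑ a, v a * tripleDeriv F a μ γ) * C (g γ ε) := by
  simp only [wdvvProd, Pi.single_apply, mul_ite, mul_one, mul_zero, ite_mul, zero_mul]
  conv_lhs => enter [2, a]; rw [Finset.sum_comm]
  simp only [Finset.sum_ite_eq', Finset.mem_univ, if_true, Finset.sum_mul]
  exact Finset.sum_comm

theorem wdvvProd_single_single (α β δ : Fin K) :
    wdvvProd F g (Pi.single α 1) (Pi.single β 1) δ = ∑ γ, tripleDeriv F α β γ * C (g γ δ) := by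
  rw [wdvvProd_single_right]
  simp [Pi.single_apply]

theorem wdvvProd_wdvvProd_single (α β μ ε : Fin K) :
    wdvvProd F g (wdvvProd F g (Pi.single α 1) (Pi.single β 1)) (Pi.single μ 1) ε =
      ∑ γ, (∑ γ', ∑ δ, tripleDeriv F α β γ' * C (g γ' δ) * tripleDeriv F δ μ γ) * C (g γ ε) := by
  rw [wdvvProd_single_right]
  simp only [wdvvProd_single_single, Finset.sum_mul]
  exact Finset.sum_congr rfl fun γ _ => by rw [Finset.sum_comm]

end

theorem wdvv_prod_comm_assoc_general {R : Type*} [CommRing R] {K : ℕ}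
    (F : MvPolynomial (Fin K) R) (g : Fin K → Fin K → R)
    (hWDVV : ∀ α₀ α₁ β₁ β₂ : Fin K,
      ∑ γ : Fin K, ∑ δ : Fin K,
        tripleDeriv F α₀ α₁ γ * C (g γ δ) * tripleDeriv F δ β₁ β₂ =
      ∑ γ : Fin K, ∑ δ : Fin K,
        tripleDeriv F α₀ β₁ γ * C (g γ δ) * tripleDeriv F δ α₁ β₂) :
    (∀ α β : Fin K,
      wdvvProd F g (Pi.single α 1) (Pi.single β 1) =
        wdvvProd F g (Pi.single β 1) (Pi.single α 1)) ∧
    (∀ α β μ : Fin K,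
      wdvvProd F g (wdvvProd F g (Pi.single α 1) (Pi.single β 1)) (Pi.single μ 1) =
        wdvvProd F g (Pi.single α 1) (wdvvProd F g (Pi.single β 1) (Pi.single μ 1))) := by
  refine ⟨fun α β => wdvvProd_comm F g _ _, fun α β μ => ?_⟩
  funext ε
  rw [wdvvProd_comm F g (Pi.single α 1) (wdvvProd F g _ _), wdvvProd_wdvvProd_single,
    wdvvProd_wdvvProd_single]
  simp only [hWDVV β μ α, tripleDeriv_comm F β α]

/-- If the potential `F` satisfies the WDVV equations with respect to a symmetric
pairing `g`, then the product `⋆` defined by its triple derivatives is commutative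
and associative on basis vectors. -/
theorem wdvv_prod_comm_assoc {R : Type*} [CommRing R] {K : ℕ}
    (F : MvPolynomial (Fin K) R) (g : Fin K → Fin K → R)
    (hg : ∀ γ δ : Fin K, g γ δ = g δ γ)
    (hWDVV : ∀ α₀ α₁ β₁ β₂ : Fin K,
      ∑ γ : Fin K, ∑ δ : Fin K,
        tripleDeriv F α₀ α₁ γ * C (g γ δ) * tripleDeriv F δ β₁ β₂ =
      ∑ γ : Fin K, ∑ δ : Fin K,
        tripleDeriv F α₀ β₁ γ * C (g γ δ) * tripleDeriv F δ α₁ β₂) :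
    (∀ α β : Fin K,
      wdvvProd F g (Pi.single α 1) (Pi.single β 1) =
        wdvvProd F g (Pi.single β 1) (Pi.single α 1)) ∧
    (∀ α β μ : Fin K,
      wdvvProd F g (wdvvProd F g (Pi.single α 1) (Pi.single β 1)) (Pi.single μ 1) =
        wdvvProd F g (Pi.single α 1) (wdvvProd F g (Pi.single β 1) (Pi.single μ 1))) :=
  wdvv_prod_comm_assoc_general F g hWDVV
end
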